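/- arXiv:math/0608511 — 3 statements merged into one kernel-verified Lean document; each statement's English description precedes it below -/
import Mathlib

section
/- Let p, p' be probability measures on a finite set X and q, q' probability measures on a finite set Y. Then the total variation distance between the product measures p⊗q and p'⊗q' satisfies ‖p⊗q - p'⊗q'‖ ≤ ‖p-p'‖ + ‖q-q'‖ - ‖p-p'‖·‖q-q'‖. -/
lemma tv_min {Z : Type*} [Fintype Z] (u v : Z → ℝ)
    (hu1 : ∑ z, u z = 1) (hv1 : ∑ z, v z = 1) :
    (1 / 2) * ∑ z, |u z - v z| = 1 - ∑ z, min (u z) (v z) := by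
  have h : ∀ z, |u z - v z| = u z + v z - 2 * min (u z) (v z) := by
    intro z
    rcases le_total (u z) (v z) with h | h
    · rw [abs_of_nonpos (by linarith), min_eq_left h]; ring
    · rw [abs_of_nonneg (by linarith), min_eq_right h]; ring
  have : ∑ z, |u z - v z| = ∑ z, (u z + v z - 2 * min (u z) (v z)) :=
    Finset.sum_congr rfl fun z _ => h z
  rw [this, Finset.sum_sub_distrib, Finset.sum_add_distrib, hu1, hv1,
    ← Finset.mul_sum]
  ring

/-- Total variation tensorization inequality for product probability measures. -/
theorem tv_tensor {X Y : Type*} [Fintype X] [Fintype Y]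
    (p p' : X → ℝ) (q q' : Y → ℝ)
    (hp : ∀ x, 0 ≤ p x) (hp1 : ∑ x, p x = 1)
    (hp' : ∀ x, 0 ≤ p' x) (hp'1 : ∑ x, p' x = 1)
    (hq : ∀ y, 0 ≤ q y) (hq1 : ∑ y, q y = 1)
    (hq' : ∀ y, 0 ≤ q' y) (hq'1 : ∑ y, q' y = 1) :
    (1 / 2) * ∑ z : X × Y, |p z.1 * q z.2 - p' z.1 * q' z.2| ≤
      ((1 / 2) * ∑ x, |p x - p' x|) + ((1 / 2) * ∑ y, |q y - q' y|) -
        ((1 / 2) * ∑ x, |p x - p' x|) * ((1 / 2) * ∑ y, |q y - q' y|) := by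
  have hprod1 : ∑ z : X × Y, p z.1 * q z.2 = 1 := by
    rw [Fintype.sum_prod_type, ← Finset.sum_mul_sum, hp1, hq1]; norm_num
  have hprod1' : ∑ z : X × Y, p' z.1 * q' z.2 = 1 := by
    rw [Fintype.sum_prod_type, ← Finset.sum_mul_sum, hp'1, hq'1]; norm_num
  rw [tv_min _ _ hp1 hp'1, tv_min _ _ hq1 hq'1, tv_min _ _ hprod1 hprod1']
  have key : ∑ z : X × Y, min (p z.1) (p' z.1) * min (q z.2) (q' z.2) ≤
      ∑ z : X × Y, min (p z.1 * q z.2) (p' z.1 * q' z.2) := by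
    apply Finset.sum_le_sum
    intro z _
    apply le_min
    · exact mul_le_mul (min_le_left _ _) (min_le_left _ _)
        (le_min (hq z.2) (hq' z.2)) (hp z.1)
    · exact mul_le_mul (min_le_right _ _) (min_le_right _ _)
        (le_min (hq z.2) (hq' z.2)) (hp' z.1)
  have hfact : ∑ z : X × Y, min (p z.1) (p' z.1) * min (q z.2) (q' z.2) =
      (∑ x, min (p x) (p' x)) * (∑ y, min (q y) (q' y)) := by
    rw [Fintype.sum_prod_type]
    exact (Finset.sum_mul_sum Finset.univ Finset.univ (fun x => min (p x) (p' x)) (fun y => min (q y) (q' y))).symm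
  nlinarith [key, hfact]
end

section
/- Let I be a finite index set, and for each i ∈ I let u^(i) and v^(i) be probability measures on a finite set S. Then the total variation distance between the product measures satisfies ‖⊗_{i∈I} u^(i) − ⊗_{i∈I} v^(i)‖ ≤ α({‖u^(i) − v^(i)‖ : i ∈ I}), where α is the symmetric function defined recursively by α_1(x)=x and α_{k+1}(x_1,…,x_{k+1}) = x_{k+1} + (1−x_{k+1})·α_k(x_1,…,x_k). -/
def alpha : (k : ℕ) → (Fin k → ℝ) → ℝ
  | 0, _ => 0
  | k + 1, x => x (Fin.last k) + (1 - x (Fin.last k)) * alpha k (x ∘ Fin.castSucc)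

lemma alpha_eq (n : ℕ) (x : Fin n → ℝ) : alpha n x = 1 - ∏ k, (1 - x k) := by
  induction n with
  | zero => simp [alpha]
  | succ n ih =>
    rw [alpha, ih, Fin.prod_univ_castSucc]
    simp only [Function.comp]
    ring

lemma sum_prod_eq {I S : Type*} [Fintype I] [DecidableEq I] [Fintype S] [DecidableEq S]
    (f : I → S → ℝ) : ∑ x : I → S, ∏ i, f i (x i) = ∏ i, ∑ s, f i s := by
  rw [Finset.prod_univ_sum]
  rw [← Fintype.piFinset_univ]

lemma abs_sub_eq (a b : ℝ) : |a - b| = a + b - 2 * min a b := by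
  rcases le_total a b with h | h
  · rw [min_eq_left h, abs_of_nonpos (by linarith)]; ring
  · rw [min_eq_right h, abs_of_nonneg (by linarith)]; ring

/-- Tensorization of total variation for products of finitely many probability measures:
`‖⊗ u^(i) − ⊗ v^(i)‖ ≤ α({‖u^(i) − v^(i)‖ : i ∈ I})`. -/
theorem tv_tensor_product {I S : Type*} [Fintype I] [DecidableEq I] [Fintype S]
    (u v : I → S → ℝ)
    (hu : ∀ i s, 0 ≤ u i s) (hu1 : ∀ i, ∑ s, u i s = 1)
    (hv : ∀ i s, 0 ≤ v i s) (hv1 : ∀ i, ∑ s, v i s = 1)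
    (e : Fin (Fintype.card I) ≃ I) :
    (1 / 2) * ∑ x : I → S, |(∏ i, u i (x i)) - ∏ i, v i (x i)| ≤
      alpha (Fintype.card I) (fun k => (1 / 2) * ∑ s, |u (e k) s - v (e k) s|) := by
  classical
  -- closed form of alpha
  rw [alpha_eq]
  have hmin : ∀ i, 1 - (1 / 2) * ∑ s, |u i s - v i s| = ∑ s, min (u i s) (v i s) := by
    intro i
    have : ∑ s, |u i s - v i s| = ∑ s, (u i s + v i s - 2 * min (u i s) (v i s)) := by
      simp_rw [abs_sub_eq]
    rw [this]
    simp [Finset.sum_sub_distrib, Finset.sum_add_distrib, hu1 i, hv1 i,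
      ← Finset.mul_sum]
    ring
  have hprod : ∏ k, (1 - (1 / 2) * ∑ s, |u (e k) s - v (e k) s|)
      = ∏ i, ∑ s, min (u i s) (v i s) := by
    simp_rw [hmin]
    exact Fintype.prod_equiv e _ _ (fun k => rfl)
  rw [hprod]
  -- LHS rewrite
  have hLHS : ∑ x : I → S, |(∏ i, u i (x i)) - ∏ i, v i (x i)|
      = 2 - 2 * ∑ x : I → S, min (∏ i, u i (x i)) (∏ i, v i (x i)) := by
    have h1 : ∑ x : I → S, ∏ i, u i (x i) = 1 := by
      rw [sum_prod_eq]; simp [hu1]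
    have h2 : ∑ x : I → S, ∏ i, v i (x i) = 1 := by
      rw [sum_prod_eq]; simp [hv1]
    simp_rw [abs_sub_eq]
    rw [Finset.sum_sub_distrib, Finset.sum_add_distrib, h1, h2, ← Finset.mul_sum]
    ring
  rw [hLHS]
  have key : ∏ i, ∑ s, min (u i s) (v i s)
      ≤ ∑ x : I → S, min (∏ i, u i (x i)) (∏ i, v i (x i)) := by
    rw [← sum_prod_eq]
    apply Finset.sum_le_sum
    intro x _
    apply le_min
    · exact Finset.prod_le_prod (fun i _ => le_min (hu i (x i)) (hv i (x i)))
        (fun i _ => min_le_left _ _)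
    · exact Finset.prod_le_prod (fun i _ => le_min (hu i (x i)) (hv i (x i)))
        (fun i _ => min_le_right _ _)
  linarith
end

section
/- If A ∈ ℝ^{M×N} and B ∈ ℝ^{N×P} are column-stochastic matrices, then ‖AB‖ ≤ ‖A‖·‖B‖, where ‖A‖ = max_{j,j'} (1/2)∑_i |A_{i,j} − A_{i,j'}|. -/
/-!
Two columns of `B` have the same sum, so their difference is a vector `x` with `∑ x = 0`; the
corresponding columns of `A * B` differ by `A *ᵥ x`. So it suffices that `A` contracts the `ℓ¹`
norm of balanced vectors by the factor `matNorm A`. Pairing `A *ᵥ x` with its sign vector `σ`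
gives `∑ j, c j * x j` with `c = σ ᵥ* A`; any two entries of `c` differ by at most
`∑ i, |A i j - A i j'| ≤ 2 * matNorm A`, and since `x` is balanced, `c` may be recentred at the
midpoint of its range, where it is bounded by `matNorm A`.
-/

noncomputable def matNorm {m n : Type*} [Fintype m] [Fintype n] [Nonempty n]
    (A : Matrix m n ℝ) : ℝ :=
  Finset.univ.sup' Finset.univ_nonempty
    (fun jj' : n × n => (1 / 2) * ∑ i, |A i jj'.1 - A i jj'.2|)

open Finset Matrix

theorem sum_mul_le_of_sum_eq_zero {n : Type*} [Fintype n] {c x : n → ℝ} {d : ℝ}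
    (hx : ∑ j, x j = 0) (hc : ∀ j j', c j - c j' ≤ 2 * d) :
    ∑ j, c j * x j ≤ d * ∑ j, |x j| := by
  rcases isEmpty_or_nonempty n with hn | hn
  · simp
  obtain ⟨jmax, hjmax⟩ := Finite.exists_max c
  obtain ⟨jmin, hjmin⟩ := Finite.exists_min c
  set mid := (c jmax + c jmin) / 2 with hmid_def
  have hmid : ∀ j, |c j - mid| ≤ d := fun j => by
    have := hc jmax jmin
    rw [hmid_def, abs_le]
    constructor <;> linarith [hjmax j, hjmin j]
  calc ∑ j, c j * x j = ∑ j, (c j - mid) * x j := by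
        simp only [sub_mul, sum_sub_distrib, ← mul_sum, hx, mul_zero, sub_zero]
    _ ≤ ∑ j, |c j - mid| * |x j| :=
        sum_le_sum fun j _ => (le_abs_self _).trans (abs_mul _ _).le
    _ ≤ ∑ j, d * |x j| := sum_le_sum fun j _ => mul_le_mul_of_nonneg_right (hmid j) (abs_nonneg _)
    _ = d * ∑ j, |x j| := (mul_sum _ _ _).symm

section matNorm

variable {m n : Type*} [Fintype m] [Fintype n] [Nonempty n]

theorem le_matNorm (A : Matrix m n ℝ) (j j' : n) :
    1 / 2 * ∑ i, |A i j - A i j'| ≤ matNorm A :=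
  le_sup' (fun jj' : n × n => (1 / 2) * ∑ i, |A i jj'.1 - A i jj'.2|) (mem_univ (j, j'))

theorem matNorm_le {A : Matrix m n ℝ} {d : ℝ} (h : ∀ j j', 1 / 2 * ∑ i, |A i j - A i j'| ≤ d) :
    matNorm A ≤ d :=
  sup'_le _ _ fun jj' _ => h jj'.1 jj'.2

theorem matNorm_nonneg (A : Matrix m n ℝ) : 0 ≤ matNorm A := by
  obtain ⟨j⟩ := ‹Nonempty n›
  simpa using le_matNorm A j j

theorem sum_abs_mulVec_le_matNorm_mul (A : Matrix m n ℝ) {x : n → ℝ} (hx : ∑ j, x j = 0) :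
    ∑ i, |(A *ᵥ x) i| ≤ matNorm A * ∑ j, |x j| := by
  set σ : m → ℝ := fun i => SignType.sign ((A *ᵥ x) i)
  have hσ : ∀ i, |σ i| ≤ 1 := fun i => by
    obtain h | h | h := SignType.trichotomy (SignType.sign ((A *ᵥ x) i)) <;> simp [σ, h]
  have hpair : ∑ i, |(A *ᵥ x) i| = ∑ j, (σ ᵥ* A) j * x j := by
    simp only [σ, ← sign_mul_self, mulVec, vecMul, dotProduct, mul_sum, sum_mul]
    rw [sum_comm]
    exact sum_congr rfl fun i _ => sum_congr rfl fun j _ => by ring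
  have hspread : ∀ j j', (σ ᵥ* A) j - (σ ᵥ* A) j' ≤ 2 * matNorm A := fun j j' => by
    have := le_matNorm A j j'
    calc (σ ᵥ* A) j - (σ ᵥ* A) j' = ∑ i, σ i * (A i j - A i j') := by
          simp only [vecMul, dotProduct, mul_sub, sum_sub_distrib]
      _ ≤ ∑ i, |A i j - A i j'| := sum_le_sum fun i _ => by
          rw [← one_mul |A i j - A i j'|]
          exact (le_abs_self _).trans ((abs_mul _ _).trans_le
            (mul_le_mul_of_nonneg_right (hσ i) (abs_nonneg _)))
      _ ≤ 2 * matNorm A := by linarith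
  rw [hpair]
  exact sum_mul_le_of_sum_eq_zero hx hspread

end matNorm

theorem matNorm_mul_le_general {M N P : ℕ} [NeZero N] [NeZero P]
    (A : Matrix (Fin M) (Fin N) ℝ) (B : Matrix (Fin N) (Fin P) ℝ)
    (hB1 : ∀ k, ∑ j, B j k = 1) :
    matNorm (A * B) ≤ matNorm A * matNorm B := by
  refine matNorm_le fun k k' => ?_
  set x : Fin N → ℝ := fun j => B j k - B j k'
  have hx : ∑ j, x j = 0 := by simp [x, sum_sub_distrib, hB1]
  have hcol : ∀ i, (A * B) i k - (A * B) i k' = (A *ᵥ x) i := fun i => by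
    simp [x, mul_apply, mulVec, dotProduct, mul_sub]
  simp only [hcol]
  calc 1 / 2 * ∑ i, |(A *ᵥ x) i| ≤ 1 / 2 * (matNorm A * ∑ j, |x j|) :=
        mul_le_mul_of_nonneg_left (sum_abs_mulVec_le_matNorm_mul A hx) (by norm_num)
    _ = matNorm A * (1 / 2 * ∑ j, |B j k - B j k'|) := by ring
    _ ≤ matNorm A * matNorm B := mul_le_mul_of_nonneg_left (le_matNorm B k k') (matNorm_nonneg A)

/-- Submultiplicativity of the total-variation matrix norm for column-stochastic matrices. -/
theorem matNorm_mul_le {M N P : ℕ} [NeZero N] [NeZero P]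
    (A : Matrix (Fin M) (Fin N) ℝ) (B : Matrix (Fin N) (Fin P) ℝ)
    (hA0 : ∀ i j, 0 ≤ A i j) (hA1 : ∀ j, ∑ i, A i j = 1)
    (hB0 : ∀ j k, 0 ≤ B j k) (hB1 : ∀ k, ∑ j, B j k = 1) :
    matNorm (A * B) ≤ matNorm A * matNorm B :=
  matNorm_mul_le_general A B hB1
end
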